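/- Let C ⊆ (ℤ/4)ⁿ be a ℤ/4-linear code that is self-dual with respect to the pairing x·y = Σᵢ xᵢyᵢ mod 4. Define A(C) = (1/2){λ ∈ ℤⁿ : λ mod 4 ∈ C} ⊆ ℝⁿ (Construction A₄). Then A(C) is a unimodular lattice; and if moreover every codeword of C has Euclidean weight divisible by 8, then A(C) is an even lattice. -/

import Mathlib

/-!
A vector of `A(C)` is `λ/2` with `λ mod 4 ∈ C`, and `⟨λ/2, μ/2⟩ = (λ·μ)/4`; so this inner
product is an integer exactly when the reductions of `λ` and `μ` are orthogonal mod 4, and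
integrality is self-orthogonality of `C`. Pairing with `2eᵢ = (4eᵢ)/2 ∈ A(C)` shows that the
dual lattice is half-integral, and a half-integral `λ/2` in the dual has `λ mod 4` orthogonal to
all of `C`, hence in `C` by self-duality. Evenness comes from `x² ≡ euclWt (x mod 4) (mod 8)`.
-/

/-- Euclidean weight of an element of `ℤ/4`: `0,1,2,3 ↦ 0,1,4,1`. -/
def euclWt (a : ZMod 4) : ℕ :=
  match a.val with
  | 0 => 0
  | 1 => 1
  | 2 => 4
  | _ => 1

/-- Construction A₄ lattice `A(C) = (1/2){λ ∈ ℤⁿ : λ mod 4 ∈ C} ⊆ ℝⁿ` of a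
`ℤ/4`-linear code `C`. -/
def latOfZ4Code (n : ℕ) (C : Submodule (ZMod 4) (Fin n → ZMod 4)) :
    Set (Fin n → ℝ) :=
  {v | ∃ l : Fin n → ℤ, (fun i => (l i : ZMod 4)) ∈ C ∧
    v = fun i => (l i : ℝ) / 2}

def intDual {n : ℕ} (L : Set (Fin n → ℝ)) : Set (Fin n → ℝ) :=
  {w | ∀ v ∈ L, ∃ m : ℤ, ∑ i, v i * w i = (m : ℝ)}

lemma eight_dvd_mul_self_sub_euclWt (l : ℤ) : (8 : ℤ) ∣ l * l - euclWt (l : ZMod 4) := by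
  -- `x * x` mod 8 only depends on `x` mod 4, so a finite check in `ZMod 8` suffices
  have key : ∀ x : ZMod 8,
      x * x = (euclWt (ZMod.castHom (by decide : 4 ∣ 8) (ZMod 4) x) : ZMod 8) := by
    decide
  refine (ZMod.intCast_zmod_eq_zero_iff_dvd _ 8).mp ?_
  push_cast
  rw [key, map_intCast, sub_self]

lemma intCast_dot_eq_zero_iff {n : ℕ} (k l : Fin n → ℤ) :
    ∑ i, (k i : ZMod 4) * l i = 0 ↔ (4 : ℤ) ∣ ∑ i, k i * l i := by
  have h := ZMod.intCast_zmod_eq_zero_iff_dvd (∑ i, k i * l i) 4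
  push_cast at h
  exact h

lemma sum_half_mul_half {n : ℕ} (k l : Fin n → ℤ) :
    ∑ i, (k i : ℝ) / 2 * ((l i : ℝ) / 2) = ((∑ i, k i * l i : ℤ) : ℝ) / 4 := by
  push_cast
  rw [Finset.sum_div]
  exact Finset.sum_congr rfl fun i _ => by ring

lemma exists_intCast_eq_sum_half_mul_half_iff {n : ℕ} (k l : Fin n → ℤ) :
    (∃ m : ℤ, ∑ i, (k i : ℝ) / 2 * ((l i : ℝ) / 2) = m) ↔
      ∑ i, (k i : ZMod 4) * l i = 0 := by
  rw [sum_half_mul_half, intCast_dot_eq_zero_iff]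
  constructor
  · rintro ⟨m, hm⟩
    refine ⟨m, ?_⟩
    rw [div_eq_iff (by norm_num)] at hm
    exact_mod_cast hm.trans (mul_comm _ _)
  · rintro ⟨m, hm⟩
    exact ⟨m, by rw [hm]; push_cast; ring⟩

section

variable {n : ℕ} {C : Submodule (ZMod 4) (Fin n → ZMod 4)}

lemma latOfZ4Code_subset_intDual (horth : ∀ x ∈ C, ∀ y ∈ C, ∑ i, x i * y i = 0) :
    latOfZ4Code n C ⊆ intDual (latOfZ4Code n C) := by
  rintro w ⟨l, hl, rfl⟩ v ⟨k, hk, rfl⟩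
  exact (exists_intCast_eq_sum_half_mul_half_iff k l).mpr (horth _ hk _ hl)

lemma two_single_mem_latOfZ4Code (i : Fin n) : Pi.single i 2 ∈ latOfZ4Code n C := by
  refine ⟨Pi.single i 4, ?_, ?_⟩
  · convert C.zero_mem using 2 with j
    rcases eq_or_ne j i with rfl | hj
    · simp only [Pi.single_eq_same, Int.cast_ofNat, Pi.zero_apply]
      rfl
    · simp [hj]
  · ext j
    rcases eq_or_ne j i with rfl | hj
    · norm_num
    · simp [hj]

lemma exists_half_intCast_of_mem_intDual {w : Fin n → ℝ}
    (hw : w ∈ intDual (latOfZ4Code n C)) : ∃ l : Fin n → ℤ, w = fun i => (l i : ℝ) / 2 := by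
  suffices ∀ i, ∃ m : ℤ, w i = (m : ℝ) / 2 by
    choose l hl using this
    exact ⟨l, funext hl⟩
  intro i
  obtain ⟨m, hm⟩ := hw _ (two_single_mem_latOfZ4Code i)
  rw [Finset.sum_eq_single i (fun j _ hj => by simp [hj]) (by simp)] at hm
  exact ⟨m, by rw [← hm]; simp⟩

lemma intDual_subset_latOfZ4Code
    (hdual : ∀ x, (∀ y ∈ C, ∑ i, x i * y i = 0) → x ∈ C) :
    intDual (latOfZ4Code n C) ⊆ latOfZ4Code n C := by
  intro w hw
  obtain ⟨l, rfl⟩ := exists_half_intCast_of_mem_intDual hw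
  refine ⟨l, hdual _ fun y hy => ?_, rfl⟩
  let k : Fin n → ℤ := fun i => ZMod.cast (y i)
  have hk : (fun i => (k i : ZMod 4)) ∈ C := by simpa only [k, ZMod.intCast_zmod_cast] using hy
  have hint := (exists_intCast_eq_sum_half_mul_half_iff k l).mp (hw _ ⟨k, hk, rfl⟩)
  simpa only [k, ZMod.intCast_zmod_cast, mul_comm] using hint

lemma even_of_mem_latOfZ4Code (hwt : ∀ x ∈ C, 8 ∣ ∑ i, euclWt (x i))
    {v : Fin n → ℝ} (hv : v ∈ latOfZ4Code n C) : ∃ m : ℤ, ∑ i, v i * v i = 2 * (m : ℝ) := by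
  obtain ⟨l, hl, rfl⟩ := hv
  have hsq : (8 : ℤ) ∣ ∑ i, l i * l i := by
    have hdiff : (8 : ℤ) ∣ ∑ i, (l i * l i - euclWt (l i : ZMod 4)) :=
      Finset.dvd_sum fun i _ => eight_dvd_mul_self_sub_euclWt (l i)
    have hwt' : (8 : ℤ) ∣ ∑ i, (euclWt (l i : ZMod 4) : ℤ) := by
      exact_mod_cast hwt _ hl
    rw [Finset.sum_sub_distrib] at hdiff
    simpa using dvd_add hdiff hwt'
  obtain ⟨m, hm⟩ := hsq
  exact ⟨m, by rw [sum_half_mul_half, hm]; push_cast; ring⟩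

end

/-- If `C ⊆ (ℤ/4)ⁿ` is self-dual for the mod-4 dot product, then `A(C)` is a
unimodular lattice (integral and equal to its dual); if moreover every codeword
has Euclidean weight divisible by 8, then `A(C)` is an even lattice. -/
theorem stmt_13 (n : ℕ) (C : Submodule (ZMod 4) (Fin n → ZMod 4))
    (hsd : ∀ x : Fin n → ZMod 4, x ∈ C ↔ ∀ y ∈ C, ∑ i, x i * y i = 0) :
    (∀ u ∈ latOfZ4Code n C, ∀ v ∈ latOfZ4Code n C, ∃ m : ℤ,
        ∑ i, u i * v i = (m : ℝ)) ∧
    (latOfZ4Code n C =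
      {w : Fin n → ℝ | ∀ v ∈ latOfZ4Code n C, ∃ m : ℤ,
        ∑ i, v i * w i = (m : ℝ)}) ∧
    ((∀ x ∈ C, 8 ∣ ∑ i, euclWt (x i)) →
      ∀ v ∈ latOfZ4Code n C, ∃ m : ℤ, ∑ i, v i * v i = 2 * (m : ℝ)) := by
  have hsub : latOfZ4Code n C ⊆ intDual (latOfZ4Code n C) :=
    latOfZ4Code_subset_intDual fun x => (hsd x).mp
  exact ⟨fun u hu v hv => hsub hv u hu,
    hsub.antisymm (intDual_subset_latOfZ4Code fun x => (hsd x).mpr),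
    fun hwt v hv => even_of_mem_latOfZ4Code hwt hv⟩
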